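/- For the Erdős–Taylor sequence with a_n = n+1 (b₁ = 1, b_{n+1} = (n+1) b_n + 1), the group G₂(b) = {t ∈ ℝ/ℤ : ∑_n ‖b_n t‖² < ∞} is uncountable, while G₁(b) = {0}. -/

import Mathlib

/-!
For digits `δ ∈ {0,1}^ℕ` put `c₀ = 0` and `c_{n+1} = ⌊b_{n+1} c_n / b_n⌋ + δ_n`. Consecutive
fractions `c_n / b_n` differ by at most `1 / b_{n+1}`, so when `b_{n+1} ≥ 4 b_n` they converge
geometrically to a point `t_δ` with `|b_n t_δ - c_n| ≤ (4/3) b_n / b_{n+1} ≤ 1/3`. Hence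
`c_n = round (b_n t_δ)`: the digits can be read back from `t_δ`, and
`‖b_n t_δ‖ ≤ (4/3) b_n / b_{n+1}` is square-summable. Since `∑ (b_n / b_{n+1})² < ∞` forces
`b_{n+1} ≥ 4 b_n` eventually, `δ ↦ t_δ` embeds the Cantor space into `G₂`.

If `b_{n+1} = a_n b_n + 1`, then `t = b_{n+1} t - a_n (b_n t)`, so
`‖t‖ ≤ ‖b_{n+1} t‖ + a_n ‖b_n t‖`. For `t ∈ G₁` the first term tends to `0`, whence
`‖b_n t‖ ≥ ‖t‖ / (2 a_n)` eventually, and `∑ 1 / a_n = ∞` forces `t = 0`.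
-/

/-- `G_p(b)` inside the circle `ℝ/ℤ`; the norm on `AddCircle (1:ℝ)` is the
distance to the nearest integer. -/
noncomputable def Gp (b : ℕ → ℕ) (p : ℝ) : Set (AddCircle (1:ℝ)) :=
  {t | Summable (fun n => ‖b n • t‖ ^ p)}

open Filter Topology

theorem Gp_comp_add (b : ℕ → ℕ) (p : ℝ) (k : ℕ) : Gp (fun n => b (n + k)) p = Gp b p := by
  ext t
  exact summable_nat_add_iff (f := fun n => ‖b n • t‖ ^ p) k

section Cantor

variable {b : ℕ → ℕ}

noncomputable def cantorNumer (b : ℕ → ℕ) (δ : ℕ → Bool) : ℕ → ℤ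
  | 0 => 0
  | n + 1 => ⌊(b (n + 1) : ℝ) * cantorNumer b δ n / b n⌋ + (δ n).toNat

noncomputable def cantorApprox (b : ℕ → ℕ) (δ : ℕ → Bool) (n : ℕ) : ℝ :=
  cantorNumer b δ n / b n

noncomputable def cantorPoint (b : ℕ → ℕ) (δ : ℕ → Bool) : ℝ :=
  limUnder atTop (cantorApprox b δ)

theorem abs_cantorNumer_succ_sub_le (δ : ℕ → Bool) (n : ℕ) :
    |(cantorNumer b δ (n + 1) : ℝ) - b (n + 1) * cantorNumer b δ n / b n| ≤ 1 := by
  set x : ℝ := b (n + 1) * cantorNumer b δ n / b n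
  have hδ : ((δ n).toNat : ℝ) ≤ 1 := by exact_mod_cast Bool.toNat_le (δ n)
  have hδ₀ : (0 : ℝ) ≤ (δ n).toNat := Nat.cast_nonneg _
  have hc : (cantorNumer b δ (n + 1) : ℝ) = ⌊x⌋ + (δ n).toNat := by
    simp [cantorNumer, x]
  rw [hc, abs_le]
  constructor <;> linarith [Int.floor_le x, Int.lt_floor_add_one x]

theorem cantorNumer_injective : Function.Injective (cantorNumer b) := by
  intro δ δ' h
  funext n
  have hn := congrFun h (n + 1)
  simp only [cantorNumer, congrFun h n] at hn
  have : (δ n).toNat = (δ' n).toNat := by exact_mod_cast add_left_cancel hn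
  revert this
  cases δ n <;> cases δ' n <;> simp

theorem mul_four_pow_le (hgrow : ∀ n, 4 * b n ≤ b (n + 1)) (n m : ℕ) :
    b n * 4 ^ m ≤ b (n + m) := by
  induction m with
  | zero => simp
  | succ m ih =>
    rw [pow_succ, ← mul_assoc, ← add_assoc]
    exact (Nat.mul_le_mul_right 4 ih).trans (by linarith [hgrow (n + m)])

theorem dist_cantorApprox_succ_le (δ : ℕ → Bool) {n : ℕ} (hb : 0 < b (n + 1)) :
    dist (cantorApprox b δ n) (cantorApprox b δ (n + 1)) ≤ 1 / b (n + 1) := by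
  have hb' : (0 : ℝ) < b (n + 1) := by exact_mod_cast hb
  have hdiff : cantorApprox b δ (n + 1) - cantorApprox b δ n
      = ((cantorNumer b δ (n + 1) : ℝ) - b (n + 1) * cantorNumer b δ n / b n) / b (n + 1) := by
    rw [cantorApprox, cantorApprox, sub_div, mul_div_assoc, mul_div_cancel_left₀ _ hb'.ne']
  rw [dist_comm, Real.dist_eq, hdiff, abs_div, abs_of_pos hb']
  exact div_le_div_of_nonneg_right (abs_cantorNumer_succ_sub_le δ n) hb'.le

variable (hb0 : 0 < b 0) (hgrow : ∀ n, 4 * b n ≤ b (n + 1))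
include hb0 hgrow

theorem pos_of_four_mul_le (n : ℕ) : 0 < b n := by
  have := mul_four_pow_le hgrow 0 n
  rw [zero_add] at this
  exact lt_of_lt_of_le (by positivity) this

theorem dist_cantorApprox_le_geometric (δ : ℕ → Bool) (n m : ℕ) :
    dist (cantorApprox b δ (m + n)) (cantorApprox b δ (m + 1 + n)) ≤
      1 / b (n + 1) * (1 / 4) ^ m := by
  have hpos := pos_of_four_mul_le hb0 hgrow
  rw [add_right_comm]
  refine (dist_cantorApprox_succ_le δ (hpos (m + n + 1))).trans ?_
  have hle : (b (n + 1) : ℝ) * 4 ^ m ≤ b (m + n + 1) := by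
    rw [show m + n + 1 = n + 1 + m by ring]
    exact_mod_cast mul_four_pow_le hgrow (n + 1) m
  rw [one_div_pow, one_div_mul_one_div]
  exact one_div_le_one_div_of_le (by have := hpos (n + 1); positivity) hle

theorem tendsto_cantorApprox (δ : ℕ → Bool) :
    Tendsto (cantorApprox b δ) atTop (𝓝 (cantorPoint b δ)) :=
  (cauchySeq_of_le_geometric (1 / 4) (1 / b 1) (by norm_num)
    (by simpa using dist_cantorApprox_le_geometric hb0 hgrow δ 0)).tendsto_limUnder

theorem dist_cantorApprox_cantorPoint_le (δ : ℕ → Bool) (n : ℕ) :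
    dist (cantorApprox b δ n) (cantorPoint b δ) ≤ 4 / 3 * (1 / b (n + 1)) := by
  have h := dist_le_of_le_geometric_of_tendsto₀ (1 / 4) (1 / b (n + 1)) (by norm_num)
    (dist_cantorApprox_le_geometric hb0 hgrow δ n)
    ((tendsto_add_atTop_iff_nat n).2 (tendsto_cantorApprox hb0 hgrow δ))
  rw [zero_add] at h
  convert h using 1
  ring

theorem abs_mul_cantorPoint_sub_le (δ : ℕ → Bool) (n : ℕ) :
    |b n * cantorPoint b δ - cantorNumer b δ n| ≤ 4 / 3 * (b n / b (n + 1)) := by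
  have hbn : (0 : ℝ) < b n := by exact_mod_cast pos_of_four_mul_le hb0 hgrow n
  have h := dist_cantorApprox_cantorPoint_le hb0 hgrow δ n
  rw [dist_comm, Real.dist_eq, cantorApprox] at h
  calc |b n * cantorPoint b δ - cantorNumer b δ n|
      = b n * |cantorPoint b δ - cantorNumer b δ n / b n| := by
        rw [← abs_of_pos hbn, ← abs_mul, abs_of_pos hbn, mul_sub, mul_div_cancel₀ _ hbn.ne']
    _ ≤ b n * (4 / 3 * (1 / b (n + 1))) := by gcongr
    _ = 4 / 3 * (b n / b (n + 1)) := by ring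

theorem abs_mul_cantorPoint_sub_le_one_third (δ : ℕ → Bool) (n : ℕ) :
    |b n * cantorPoint b δ - cantorNumer b δ n| ≤ 1 / 3 := by
  refine (abs_mul_cantorPoint_sub_le hb0 hgrow δ n).trans ?_
  have hb : (0 : ℝ) < b (n + 1) := by exact_mod_cast pos_of_four_mul_le hb0 hgrow (n + 1)
  have hle : 4 * (b n : ℝ) ≤ b (n + 1) := by exact_mod_cast hgrow n
  rw [← mul_div_assoc, div_le_div_iff₀ hb (by norm_num)]
  linarith

theorem round_mul_cantorPoint (δ : ℕ → Bool) (n : ℕ) :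
    round (b n * cantorPoint b δ) = cantorNumer b δ n := by
  have h := abs_le.1 (abs_mul_cantorPoint_sub_le_one_third hb0 hgrow δ n)
  rw [round_eq_iff]
  constructor <;> linarith

theorem norm_nsmul_cantorPoint (δ : ℕ → Bool) (n : ℕ) :
    ‖b n • (cantorPoint b δ : UnitAddCircle)‖ =
      |b n * cantorPoint b δ - cantorNumer b δ n| := by
  rw [← AddCircle.coe_nsmul, nsmul_eq_mul, UnitAddCircle.norm_eq,
    round_mul_cantorPoint hb0 hgrow]

theorem cantorPoint_mem_Gp_two (hsum : Summable fun n => ((b n : ℝ) / b (n + 1)) ^ 2)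
    (δ : ℕ → Bool) : (cantorPoint b δ : UnitAddCircle) ∈ Gp b 2 := by
  refine (hsum.mul_left ((4 / 3) ^ 2)).of_nonneg_of_le (fun n => by positivity) fun n => ?_
  rw [Real.rpow_two, norm_nsmul_cantorPoint hb0 hgrow, ← mul_pow]
  exact pow_le_pow_left₀ (abs_nonneg _) (abs_mul_cantorPoint_sub_le hb0 hgrow δ n) 2

theorem injective_coe_cantorPoint :
    Function.Injective fun δ => (cantorPoint b δ : UnitAddCircle) := by
  have hmem : ∀ δ, cantorPoint b δ ∈ Set.Ico (-(1 / 2) : ℝ) (-(1 / 2) + 1) := by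
    intro δ
    have hb : (1 : ℝ) ≤ b 0 := by exact_mod_cast hb0
    have h := abs_mul_cantorPoint_sub_le_one_third hb0 hgrow δ 0
    rw [cantorNumer, Int.cast_zero, sub_zero, abs_mul, Nat.abs_cast] at h
    have h' := abs_le.1 (le_trans (le_mul_of_one_le_left (abs_nonneg _) hb) h)
    constructor <;> linarith
  intro δ δ' h
  have h' := (AddCircle.coe_eq_coe_iff_of_mem_Ico (hmem δ) (hmem δ')).1 h
  apply cantorNumer_injective
  funext n
  rw [← round_mul_cantorPoint hb0 hgrow, ← round_mul_cantorPoint hb0 hgrow, h']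

theorem not_countable_Gp_two_of_four_mul_le
    (hsum : Summable fun n => ((b n : ℝ) / b (n + 1)) ^ 2) : ¬ (Gp b 2).Countable := by
  have : Uncountable (ℕ → Bool) := by
    rw [← Cardinal.aleph0_lt_mk_iff]
    simpa using Cardinal.cantor Cardinal.aleph0
  exact fun hcount => Set.not_countable_univ <|
    Set.MapsTo.countable_of_injOn (fun δ _ => cantorPoint_mem_Gp_two hb0 hgrow hsum δ)
      (injective_coe_cantorPoint hb0 hgrow).injOn hcount

end Cantor

theorem not_countable_Gp_two {b : ℕ → ℕ} (hb : ∀ n, 0 < b n)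
    (hsum : Summable fun n => ((b n : ℝ) / b (n + 1)) ^ 2) : ¬ (Gp b 2).Countable := by
  have hlacunary : ∀ᶠ n in atTop, 4 * b n ≤ b (n + 1) := by
    have hsmall := hsum.tendsto_atTop_zero.eventually
      (gt_mem_nhds (by norm_num : (0 : ℝ) < (1 / 4) ^ 2))
    filter_upwards [hsmall] with n hn
    have hb' : (0 : ℝ) < b (n + 1) := by exact_mod_cast hb (n + 1)
    have h := (pow_lt_pow_iff_left₀ (by positivity) (by norm_num) two_ne_zero).1 hn
    rw [div_lt_iff₀ hb'] at h
    exact_mod_cast (by linarith : 4 * (b n : ℝ) ≤ b (n + 1))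
  obtain ⟨N, hN⟩ := eventually_atTop.1 hlacunary
  rw [← Gp_comp_add b 2 N]
  refine not_countable_Gp_two_of_four_mul_le (hb (0 + N)) (fun n => ?_) ?_
  · simpa only [add_right_comm] using hN (n + N) (Nat.le_add_left N n)
  · simpa only [add_right_comm] using (summable_nat_add_iff N).2 hsum

theorem Gp_one_eq_singleton_zero {a b : ℕ → ℕ} (ha : ¬ Summable fun n => (1 : ℝ) / a n)
    (hrec : ∀ᶠ n in atTop, b (n + 1) = a n * b n + 1) : Gp b 1 = {0} := by
  ext t
  simp only [Gp, Set.mem_ofPred_eq, Set.mem_singleton_iff, Real.rpow_one]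
  refine ⟨fun ht => ?_, fun ht => by simp [ht]⟩
  by_contra hne
  have htpos : 0 < ‖t‖ := norm_pos_iff.2 hne
  have hsmall : ∀ᶠ n in atTop, ‖b (n + 1) • t‖ ≤ ‖t‖ / 2 :=
    ((tendsto_add_atTop_iff_nat 1).2 ht.tendsto_atTop_zero).eventually
      (ge_mem_nhds (half_pos htpos))
  have hlower : ∀ᶠ n in atTop, ‖(1 : ℝ) / a n‖ ≤ 2 / ‖t‖ * ‖b n • t‖ := by
    filter_upwards [hrec, hsmall] with n hn hsm
    have hsplit : t = b (n + 1) • t - a n • b n • t := by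
      rw [hn, add_nsmul, one_nsmul, mul_nsmul', add_sub_cancel_left]
    have htriangle : ‖t‖ ≤ ‖b (n + 1) • t‖ + a n * ‖b n • t‖ :=
      calc ‖t‖ = ‖b (n + 1) • t - a n • b n • t‖ := congrArg norm hsplit
        _ ≤ ‖b (n + 1) • t‖ + ‖a n • b n • t‖ := norm_sub_le _ _
        _ ≤ ‖b (n + 1) • t‖ + a n * ‖b n • t‖ := by gcongr; exact norm_nsmul_le
    rw [Real.norm_of_nonneg (by positivity)]
    calc (1 : ℝ) / a n = 2 / ‖t‖ * (‖t‖ / 2 / a n) := by field_simp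
      _ ≤ 2 / ‖t‖ * ‖b n • t‖ := by
        gcongr
        exact div_le_of_le_mul₀ (Nat.cast_nonneg _) (norm_nonneg _) (by linarith)
  exact ha ((ht.mul_left (2 / ‖t‖)).of_norm_bounded_eventually
    (Nat.cofinite_eq_atTop ▸ hlower))

/-- For the Erdős–Taylor sequence with `aₙ = n + 1` (`b₁ = 1`, `bₙ₊₁ = (n+1) bₙ + 1`),
`G₂(b)` is uncountable while `G₁(b) = {0}`. -/
theorem stmt11 (b : ℕ → ℕ) (hb1 : b 1 = 1)
    (hrec : ∀ n, 1 ≤ n → b (n + 1) = (n + 1) * b n + 1) (hb0 : b 0 = 1) :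
    ¬ (Gp b 2).Countable ∧ Gp b 1 = {0} := by
  have hpos : ∀ n, 0 < b n
    | 0 => by omega
    | 1 => by omega
    | n + 2 => by rw [hrec (n + 1) (by omega)]; positivity
  have hratio : ∀ n ≥ 1, ‖((b n : ℝ) / b (n + 1)) ^ 2‖ ≤ 1 / (n : ℝ) ^ 2 := by
    intro n hn
    have hle : (b n : ℝ) * n ≤ b (n + 1) := by
      rw [hrec n hn]; push_cast; nlinarith
    rw [Real.norm_of_nonneg (by positivity), ← one_div_pow]
    refine pow_le_pow_left₀ (by positivity) ?_ 2
    rw [div_le_div_iff₀ (by exact_mod_cast hpos (n + 1)) (by exact_mod_cast hn)]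
    linarith
  refine ⟨not_countable_Gp_two hpos ?_,
    Gp_one_eq_singleton_zero (a := fun n => n + 1) ?_ (eventually_atTop.2 ⟨1, hrec⟩)⟩
  · exact (Real.summable_one_div_nat_pow.2 one_lt_two).of_norm_bounded_eventually
      (Nat.cofinite_eq_atTop ▸ eventually_atTop.2 ⟨1, hratio⟩)
  · exact fun h => Real.not_summable_one_div_natCast ((summable_nat_add_iff 1).1 h)
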